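/- For α, c > 0 and t ∈ (x_−, x_+) with x_± = (α(c−1) ± 2√(αc))/(α+1), the quantity (α(c−1) + t(1−α)) / (2√(α(c−t)(t+1))) lies in the open interval (−1, 1), so that ρ(t) = (1/π)·arccos of this quantity is well-defined and lies in (0,1). -/

import Mathlib

open Real in
/-- For `t` strictly inside the support `(x_−, x_+)`, the argument of the arccosine defining the
limiting density lies in `(−1, 1)`, so `ρ(t) = (1/π) arccos(…)` is well defined and in `(0, 1)`. -/
theorem density_well_defined (α c t : ℝ) (hα : 0 < α) (hc : 0 < c) (hne : α ≠ c)
    (hαc : α * c ≠ 1)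
    (hlo : (α * (c - 1) - 2 * Real.sqrt (α * c)) / (α + 1) < t)
    (hhi : t < (α * (c - 1) + 2 * Real.sqrt (α * c)) / (α + 1)) :
    (-1 < (α * (c - 1) + t * (1 - α)) / (2 * Real.sqrt (α * (c - t) * (t + 1))) ∧
      (α * (c - 1) + t * (1 - α)) / (2 * Real.sqrt (α * (c - t) * (t + 1))) < 1) ∧
    (0 < (1 / π) * Real.arccos
        ((α * (c - 1) + t * (1 - α)) / (2 * Real.sqrt (α * (c - t) * (t + 1)))) ∧
      (1 / π) * Real.arccos
        ((α * (c - 1) + t * (1 - α)) / (2 * Real.sqrt (α * (c - t) * (t + 1)))) < 1) := by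
  have hα1 : (0:ℝ) < α + 1 := by linarith
  set s := Real.sqrt (α * c) with hs
  have hs2 : s ^ 2 = α * c := Real.sq_sqrt (by positivity)
  have hlo' : α * (c - 1) - 2 * s < t * (α + 1) := by
    have := (div_lt_iff₀ hα1).mp hlo; linarith
  have hhi' : t * (α + 1) < α * (c - 1) + 2 * s := by
    have := (lt_div_iff₀ hα1).mp hhi; linarith
  -- key: A² < 4 D where A = α(c-1)+t(1-α), D = α(c-t)(t+1)
  have hA2 : (α * (c - 1) + t * (1 - α)) ^ 2 < 4 * (α * (c - t) * (t + 1)) := by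
    nlinarith [mul_pos (sub_pos.mpr hlo') (sub_pos.mpr hhi'), hs2]
  have hD : 0 < α * (c - t) * (t + 1) := by nlinarith [sq_nonneg (α * (c - 1) + t * (1 - α))]
  set r := Real.sqrt (α * (c - t) * (t + 1)) with hr
  have hr2 : r ^ 2 = α * (c - t) * (t + 1) := Real.sq_sqrt hD.le
  have hrpos : 0 < r := Real.sqrt_pos.mpr hD
  have h2r : 0 < 2 * r := by linarith
  have hlt : α * (c - 1) + t * (1 - α) < 2 * r := by nlinarith
  have hgt : -(2 * r) < α * (c - 1) + t * (1 - α) := by nlinarith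
  have h1 : (α * (c - 1) + t * (1 - α)) / (2 * r) < 1 := (div_lt_one h2r).mpr hlt
  have h2 : -1 < (α * (c - 1) + t * (1 - α)) / (2 * r) := by
    rw [neg_lt, ← neg_div]
    exact (div_lt_one h2r).mpr (by linarith)
  refine ⟨⟨h2, h1⟩, ?_, ?_⟩
  · exact mul_pos (by positivity) (Real.arccos_pos.mpr h1)
  · have hπ : Real.arccos ((α * (c - 1) + t * (1 - α)) / (2 * r)) < π :=
      lt_of_le_of_ne (Real.arccos_le_pi _)
        (fun h => absurd (Real.arccos_eq_pi.mp h) (by linarith))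
    rw [one_div, inv_mul_lt_iff₀ Real.pi_pos, mul_one]
    exact hπ
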